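/- arXiv:2501.13582 — 3 statements merged into one kernel-verified Lean document; each statement's English description precedes it below -/
import Mathlib

section
/- Maximum entropy bound for positive-integer-valued random variables with a log-mean constraint: if K is a random variable taking values in the positive integers with E[log K] ≤ a (log base 2, a ≥ 0), then H(K) ≤ a + log(a + 2) + 2. -/
open Finset

/-- Gibbs-type per-term inequality. -/
lemma gibbs_term (x q : ℝ) (hx : 0 ≤ x) (hq : 0 < q) :
    -(x * Real.logb 2 x) ≤ -(x * Real.logb 2 q) + (q - x) / Real.log 2 := by
  have hl2 : 0 < Real.log 2 := Real.log_pos one_lt_two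
  rcases eq_or_lt_of_le hx with h | h
  · rw [← h]
    simp only [zero_mul, neg_zero, sub_zero, zero_add]
    positivity
  · have key : x * Real.log (q / x) ≤ q - x := by
      calc x * Real.log (q / x) ≤ x * (q / x - 1) :=
            mul_le_mul_of_nonneg_left (Real.log_le_sub_one_of_pos (by positivity)) hx
        _ = q - x := by field_simp
    rw [Real.log_div (ne_of_gt hq) (ne_of_gt h)] at key
    have goal' : -(x * Real.log x) ≤ -(x * Real.log q) + (q - x) := by nlinarith [key]
    calc -(x * Real.logb 2 x) = (-(x * Real.log x)) / Real.log 2 := by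
          rw [Real.logb]; ring
      _ ≤ (-(x * Real.log q) + (q - x)) / Real.log 2 := by gcongr
      _ = -(x * Real.logb 2 q) + (q - x) / Real.log 2 := by
          rw [Real.logb]; ring

/-- Telescoping comparison term. -/
lemma tele_term (ε : ℝ) (hε : 0 < ε) (i : ℕ) :
    ε * ((i : ℝ) + 2) ^ (-(1 + ε)) ≤ ((i : ℝ) + 1) ^ (-ε) - ((i : ℝ) + 2) ^ (-ε) := by
  set x : ℝ := (i : ℝ) + 1 with hxdef
  set y : ℝ := (i : ℝ) + 2 with hydef
  have hx : 0 < x := by positivity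
  have hy : 0 < y := by positivity
  have hyx : y = x + 1 := by rw [hxdef, hydef]; ring
  have hr : 0 < x / y := by positivity
  have hlog : Real.log (x / y) ≤ -(1 / y) := by
    have h1 := Real.log_le_sub_one_of_pos hr
    have h2 : x / y - 1 = -(1 / y) := by field_simp; linarith
    linarith
  have h3 : 1 + ε / y ≤ (x / y) ^ (-ε) := by
    rw [Real.rpow_def_of_pos hr]
    have h1 : ε / y ≤ Real.log (x / y) * (-ε) := by
      have h := mul_le_mul_of_nonneg_right hlog hε.le
      have e : -(1 / y) * ε = -(ε / y) := by ring
      nlinarith [h]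
    linarith [Real.add_one_le_exp (Real.log (x / y) * (-ε))]
  have h4 : (x / y) ^ (-ε) = x ^ (-ε) / y ^ (-ε) := Real.div_rpow hx.le hy.le (-ε)
  have hyε : 0 < y ^ (-ε) := Real.rpow_pos_of_pos hy _
  have h5 : y ^ (-ε) * (1 + ε / y) ≤ x ^ (-ε) := by
    have h := mul_le_mul_of_nonneg_left h3 hyε.le
    rw [h4] at h
    calc y ^ (-ε) * (1 + ε / y) ≤ y ^ (-ε) * (x ^ (-ε) / y ^ (-ε)) := h
      _ = x ^ (-ε) := by field_simp
  have h6 : y ^ (-(1 + ε)) = y ^ (-ε) / y := by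
    rw [show -(1 + ε) = -ε + (-1) by ring, Real.rpow_add hy, Real.rpow_neg_one]
    ring
  rw [h6]
  have h7 : y ^ (-ε) * (1 + ε / y) = y ^ (-ε) + ε * (y ^ (-ε) / y) := by
    field_simp
  linarith [h7 ▸ h5]

/-- Partial sums of the p-series with exponent 1+ε are at most 1 + 1/ε. -/
lemma qsum (ε : ℝ) (hε : 0 < ε) (s : Finset ℕ) :
    ∑ k ∈ s, (k : ℝ) ^ (-(1 + ε)) ≤ 1 + 1 / ε := by
  set M := s.sup id with hM
  have hsub : s ⊆ Finset.range (M + 2) := by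
    intro k hk
    simp only [Finset.mem_range]
    have h := Finset.le_sup (f := id) hk
    simp only [id_eq] at h
    omega
  have hnn : ∀ k : ℕ, (0:ℝ) ≤ (k : ℝ) ^ (-(1 + ε)) := fun k =>
    Real.rpow_nonneg (Nat.cast_nonneg k) _
  have step1 : ∑ k ∈ s, (k : ℝ) ^ (-(1 + ε)) ≤
      ∑ k ∈ Finset.range (M + 2), (k : ℝ) ^ (-(1 + ε)) :=
    Finset.sum_le_sum_of_subset_of_nonneg hsub (fun k _ _ => hnn k)
  have split : ∑ k ∈ Finset.range (M + 2), (k : ℝ) ^ (-(1 + ε)) =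
      (∑ i ∈ Finset.range M, ((i : ℝ) + 2) ^ (-(1 + ε))) + ((1:ℝ)) ^ (-(1 + ε))
        + ((0:ℝ)) ^ (-(1 + ε)) := by
    rw [Finset.sum_range_succ' (fun k => (k : ℝ) ^ (-(1 + ε))) (M + 1),
        Finset.sum_range_succ' (fun k => ((k + 1 : ℕ) : ℝ) ^ (-(1 + ε))) M]
    have e1 : ∀ i ∈ Finset.range M,
        (((i + 1 + 1 : ℕ)) : ℝ) ^ (-(1 + ε)) = ((i : ℝ) + 2) ^ (-(1 + ε)) := by
      intro i _; congr 1; push_cast; ring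
    rw [Finset.sum_congr rfl e1]
    norm_num
  have h0 : ((0:ℝ)) ^ (-(1 + ε)) = 0 := Real.zero_rpow (by intro h; nlinarith)
  have h1 : ((1:ℝ)) ^ (-(1 + ε)) = 1 := Real.one_rpow _
  have tail : ∑ i ∈ Finset.range M, ((i : ℝ) + 2) ^ (-(1 + ε)) ≤ 1 / ε := by
    set g : ℕ → ℝ := fun i => ((i : ℝ) + 1) ^ (-ε) with hg
    have hterm : ∀ i ∈ Finset.range M, ((i : ℝ) + 2) ^ (-(1 + ε)) ≤ (g i - g (i + 1)) / ε := by
      intro i _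
      rw [le_div_iff₀ hε]
      have ht := tele_term ε hε i
      have e : g i - g (i + 1) = ((i : ℝ) + 1) ^ (-ε) - ((i : ℝ) + 2) ^ (-ε) := by
        simp only [hg]
        congr 2
        push_cast; ring
      rw [e]; linarith
    calc ∑ i ∈ Finset.range M, ((i : ℝ) + 2) ^ (-(1 + ε))
        ≤ ∑ i ∈ Finset.range M, (g i - g (i + 1)) / ε := Finset.sum_le_sum hterm
      _ = (∑ i ∈ Finset.range M, (g i - g (i + 1))) / ε := by rw [Finset.sum_div]
      _ = (g 0 - g M) / ε := by rw [Finset.sum_range_sub' g M]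
      _ ≤ 1 / ε := by
          have hg0 : g 0 = 1 := by simp [hg]
          have hgM : 0 ≤ g M := Real.rpow_nonneg (by positivity) _
          gcongr
          linarith
  calc ∑ k ∈ s, (k : ℝ) ^ (-(1 + ε)) ≤ _ := step1
    _ = _ := split
    _ ≤ 1 / ε + 1 + 0 := by rw [h0, h1]; linarith [tail]
    _ = 1 + 1 / ε := by ring

/-- If `K` is a positive-integer-valued random variable (distribution `p`)
with `E[log₂ K] ≤ a` (`a ≥ 0`), then `H(K) ≤ a + log₂(a+2) + 2`. Since the entropy
summands `-(p k log₂ p k)` are nonnegative, the entropy bound is expressed via all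
finite partial sums. -/
theorem stmt3 (p : ℕ → ℝ) (a : ℝ) (ha : 0 ≤ a)
    (hp0 : p 0 = 0) (hnn : ∀ k, 0 ≤ p k)
    (hsum : ∑' k, p k = 1)
    (hE : ∀ s : Finset ℕ, ∑ k ∈ s, p k * Real.logb 2 k ≤ a) :
    ∀ s : Finset ℕ, ∑ k ∈ s, -(p k * Real.logb 2 (p k)) ≤ a + Real.logb 2 (a + 2) + 2 := by
  intro s
  have hl2 : 0 < Real.log 2 := Real.log_pos one_lt_two
  set ε : ℝ := 1 / (a + 1) with hεdef
  have hεpos : 0 < ε := by positivity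
  set c : ℝ := (a + 2)⁻¹ with hcdef
  have hcpos : 0 < c := by positivity
  set L : ℝ := Real.logb 2 (a + 2) with hLdef
  have hL1 : 1 ≤ L := by
    rw [hLdef, show (1:ℝ) = Real.logb 2 2 by simp]
    gcongr
    · norm_num
    · linarith
  set q : ℕ → ℝ := fun k => c * (k : ℝ) ^ (-(1 + ε)) with hqdef
  have hqnn : ∀ k, 0 ≤ q k := fun k =>
    mul_nonneg hcpos.le (Real.rpow_nonneg (Nat.cast_nonneg k) _)
  -- per-term bound
  have perterm : ∀ k ∈ s, -(p k * Real.logb 2 (p k)) ≤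
      p k * (L + (1 + ε) * Real.logb 2 k) + (q k - p k) / Real.log 2 := by
    intro k _
    rcases Nat.eq_zero_or_pos k with rfl | hk
    · rw [hp0]
      have hq0 : q 0 = 0 := by
        simp only [hqdef, Nat.cast_zero]
        rw [Real.zero_rpow (by intro h; nlinarith)]
        ring
      simp [hq0]
    · have hkpos : (0:ℝ) < (k : ℝ) := by exact_mod_cast hk
      have hqk : 0 < q k := mul_pos hcpos (Real.rpow_pos_of_pos hkpos _)
      have hgibbs := gibbs_term (p k) (q k) (hnn k) hqk
      have hlogq : Real.logb 2 (q k) = -L + (-(1 + ε)) * Real.logb 2 k := by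
        show Real.logb 2 (c * (k : ℝ) ^ (-(1 + ε))) = _
        rw [Real.logb_mul (ne_of_gt hcpos) (ne_of_gt (Real.rpow_pos_of_pos hkpos _))]
        rw [hcdef, Real.logb_inv]
        congr 1
        rw [Real.logb, Real.logb, Real.log_rpow hkpos]
        ring
      rw [hlogq] at hgibbs
      calc -(p k * Real.logb 2 (p k)) ≤
            -(p k * (-L + (-(1 + ε)) * Real.logb 2 k)) + (q k - p k) / Real.log 2 := hgibbs
        _ = p k * (L + (1 + ε) * Real.logb 2 k) + (q k - p k) / Real.log 2 := by ring
  have hsummable : Summable p := by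
    by_contra h
    rw [tsum_eq_zero_of_not_summable h] at hsum; norm_num at hsum
  set P : ℝ := ∑ k ∈ s, p k with hPdef
  have hP0 : 0 ≤ P := Finset.sum_nonneg (fun k _ => hnn k)
  have hP1 : P ≤ 1 := hsum ▸ Summable.sum_le_tsum s (fun i _ => hnn i) hsummable
  set S : ℝ := ∑ k ∈ s, p k * Real.logb 2 k with hSdef
  have hSa : S ≤ a := hE s
  set Q : ℝ := ∑ k ∈ s, q k with hQdef
  have hQ1 : Q ≤ 1 := by
    have hQc : Q = c * ∑ k ∈ s, (k : ℝ) ^ (-(1 + ε)) := by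
      rw [hQdef, Finset.mul_sum]
    rw [hQc]
    have h1ε : 1 + 1 / ε = a + 2 := by
      rw [hεdef, one_div_one_div]; ring
    calc c * ∑ k ∈ s, (k : ℝ) ^ (-(1 + ε)) ≤ c * (1 + 1 / ε) :=
          mul_le_mul_of_nonneg_left (qsum ε hεpos s) hcpos.le
      _ = 1 := by rw [h1ε, hcdef]; field_simp
  have main : ∑ k ∈ s, -(p k * Real.logb 2 (p k)) ≤
      L * P + (1 + ε) * S + (Q - P) / Real.log 2 := by
    calc ∑ k ∈ s, -(p k * Real.logb 2 (p k))
        ≤ ∑ k ∈ s, (p k * (L + (1 + ε) * Real.logb 2 k) + (q k - p k) / Real.log 2) :=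
          Finset.sum_le_sum perterm
      _ = (∑ k ∈ s, (L * p k + (1 + ε) * (p k * Real.logb 2 k)))
            + (∑ k ∈ s, (q k - p k)) / Real.log 2 := by
          rw [Finset.sum_add_distrib, Finset.sum_div]
          congr 1
          apply Finset.sum_congr rfl; intro k _; ring
      _ = L * P + (1 + ε) * S + (Q - P) / Real.log 2 := by
          rw [Finset.sum_add_distrib, ← Finset.mul_sum, ← Finset.mul_sum,
              Finset.sum_sub_distrib]
  -- arithmetic finish
  have hεa : (1 + ε) * S ≤ a + 1 := by
    have h1 : (1 + ε) * S ≤ (1 + ε) * a :=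
      mul_le_mul_of_nonneg_left hSa (by linarith)
    have h2 : ε * a ≤ 1 := by
      rw [hεdef, div_mul_eq_mul_div, div_le_one (by linarith)]
      linarith
    nlinarith
  have hdiv : (Q - P) / Real.log 2 ≤ (1 - P) * 1.5 := by
    have h1 : (Q - P) / Real.log 2 ≤ (1 - P) / Real.log 2 := by gcongr
    have h2 : (1 - P) / Real.log 2 ≤ (1 - P) * 1.5 := by
      rw [div_le_iff₀ hl2]
      nlinarith [Real.log_two_gt_d9, hP1]
    linarith
  have final : L * P + (1 - P) * 1.5 ≤ L + 1 := by
    nlinarith [mul_nonneg (sub_nonneg.2 hP1) (sub_nonneg.2 hL1)]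
  linarith [main, hεa, hdiv, final]
end

section
/- Relation between IB and noisy rate-distortion: fix a finite joint distribution P_{X,Y} and a channel P_{U|Y} (with induced joint law on (X,Y,U) via the Markov chain X→Y→U). Define the distortion d(x,u) := −ι_{X;U}(x;u) where ι_{X;U} is the information density under the induced joint. For any other channel P_{Ũ|Y} (with Ũ on the same alphabet as U, Markov X→Y→Ũ), the constraint E[d(X,Ũ)] ≤ −C implies I(X;Ũ) ≥ C. Consequently R(−C) := min over P_{Ũ|Y} with E[d(X,Ũ)] ≤ −C of I(Y;Ũ) equals IB(C) := min over P_{Ũ|Y} with I(X;Ũ) ≥ C of I(Y;Ũ), provided the minimizer of IB(C) satisfies E[ι_{X;U*}(X;U*)] = I(X;U*). -/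
open Finset

noncomputable section

variable {X Y U : Type*}

/-- Joint law of `(X,U)` induced by the source joint `p` on `(X,Y)` and a channel
`r : Y → U` via the Markov chain `X → Y → U`. -/
def jnt [Fintype Y] (p : X → Y → ℝ) (r : Y → U → ℝ) (x : X) (u : U) : ℝ :=
  ∑ y, p x y * r y u

/-- Marginal of `X`. -/
def mX [Fintype Y] (p : X → Y → ℝ) (x : X) : ℝ := ∑ y, p x y

/-- Marginal of `Y`. -/
def mY [Fintype X] (p : X → Y → ℝ) (y : Y) : ℝ := ∑ x, p x y

/-- Marginal of `U` under channel `r`. -/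
def mU [Fintype X] [Fintype Y] (p : X → Y → ℝ) (r : Y → U → ℝ) (u : U) : ℝ :=
  ∑ x, jnt p r x u

/-- Information density `ι_{X;U}(x;u)` under channel `r` (log base 2). -/
def infoXU [Fintype X] [Fintype Y] (p : X → Y → ℝ) (r : Y → U → ℝ) (x : X) (u : U) : ℝ :=
  Real.logb 2 (jnt p r x u / (mX p x * mU p r u))

/-- Mutual information `I(X;U)` under channel `r`. -/
def mutXU [Fintype X] [Fintype Y] [Fintype U] (p : X → Y → ℝ) (r : Y → U → ℝ) : ℝ :=
  ∑ x, ∑ u, jnt p r x u * infoXU p r x u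

/-- Mutual information `I(Y;U)` under channel `r`. -/
def mutYU [Fintype X] [Fintype Y] [Fintype U] (p : X → Y → ℝ) (r : Y → U → ℝ) : ℝ :=
  ∑ y, ∑ u, mY p y * r y u * Real.logb 2 (r y u / mU p r u)

/-- Expected distortion `E[d(X,Ũ)]` with `d(x,u) = −ι_{X;U}(x;u)` (information density
defined from the fixed channel `qs`), where `Ũ` is generated by channel `r`. -/
def expDist [Fintype X] [Fintype Y] [Fintype U] (p : X → Y → ℝ) (qs r : Y → U → ℝ) : ℝ :=
  ∑ x, ∑ u, jnt p r x u * (-(infoXU p qs x u))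

/-- The set of channels from `Y` to `U`. -/
def Chan (Y U : Type*) [Fintype U] : Set (Y → U → ℝ) :=
  {r | (∀ y u, 0 ≤ r y u) ∧ ∀ y, ∑ u, r y u = 1}

lemma gibbs {I : Type*} [Fintype I] (a q : I → ℝ)
    (ha : ∀ i, 0 ≤ a i) (hq : ∀ i, 0 ≤ q i) (haq : ∀ i, 0 < a i → 0 < q i)
    (hsum : ∑ i, q i = ∑ i, a i) :
    0 ≤ ∑ i, a i * Real.logb 2 (a i / q i) := by
  have hlog2 : 0 < Real.log 2 := Real.log_pos (by norm_num)
  have key : ∑ i, a i * Real.log (q i / a i) ≤ 0 := by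
    calc ∑ i, a i * Real.log (q i / a i) ≤ ∑ i, (q i - a i) := by
          apply Finset.sum_le_sum
          intro i _
          rcases eq_or_lt_of_le (ha i) with h | h
          · simp [← h, hq i]
          · have hqi := haq i h
            have h1 : Real.log (q i / a i) ≤ q i / a i - 1 :=
              Real.log_le_sub_one_of_pos (div_pos hqi h)
            have := mul_le_mul_of_nonneg_left h1 (le_of_lt h)
            calc a i * Real.log (q i / a i) ≤ a i * (q i / a i - 1) := this
              _ = q i - a i := by field_simp
      _ = 0 := by rw [Finset.sum_sub_distrib, hsum, sub_self]
  have heq : ∑ i, a i * Real.logb 2 (a i / q i)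
      = -(∑ i, a i * Real.log (q i / a i)) / Real.log 2 := by
    rw [← Finset.sum_neg_distrib, Finset.sum_div]
    apply Finset.sum_congr rfl
    intro i _
    rw [Real.logb]
    rw [show a i / q i = (q i / a i)⁻¹ from (inv_div _ _).symm, Real.log_inv]
    ring
  rw [heq]
  exact div_nonneg (neg_nonneg.2 key) hlog2.le

/-- Key inequality: `I(X;Ũ) ≥ E[ι_{X;U}(X;Ũ)]`. -/
lemma keyineq [Fintype X] [Fintype Y] [Fintype U]
    (p : X → Y → ℝ) (hp : ∀ x y, 0 < p x y) (hps : ∑ x, ∑ y, p x y = 1)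
    (qs : Y → U → ℝ) (hqpos : ∀ y u, 0 < qs y u)
    (r : Y → U → ℝ) (hr : ∀ y u, 0 ≤ r y u) :
    ∑ x, ∑ u, jnt p r x u * infoXU p qs x u ≤ mutXU p r := by
  have hX : Nonempty X := by
    by_contra h
    rw [not_nonempty_iff] at h
    simp [Finset.univ_eq_empty] at hps
  have hY : Nonempty Y := by
    by_contra h
    rw [not_nonempty_iff] at h
    simp [Finset.univ_eq_empty] at hps
  have hmX : ∀ x, 0 < mX p x := fun x =>
    Finset.sum_pos (fun y _ => hp x y) Finset.univ_nonempty
  have hjq : ∀ x u, 0 < jnt p qs x u := fun x u =>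
    Finset.sum_pos (fun y _ => mul_pos (hp x y) (hqpos y u)) Finset.univ_nonempty
  have hmUq : ∀ u, 0 < mU p qs u := fun u =>
    Finset.sum_pos (fun x _ => hjq x u) Finset.univ_nonempty
  have ha0 : ∀ x u, 0 ≤ jnt p r x u := fun x u =>
    Finset.sum_nonneg fun y _ => mul_nonneg (hp x y).le (hr y u)
  have hmUr : ∀ u, 0 ≤ mU p r u := fun u => Finset.sum_nonneg fun x _ => ha0 x u
  have hle : ∀ x u, jnt p r x u ≤ mU p r u := fun x u =>
    Finset.single_le_sum (fun x' _ => ha0 x' u) (Finset.mem_univ x)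
  -- q
  set q : X → U → ℝ := fun x u => jnt p qs x u * mU p r u / mU p qs u with hqdef
  have hq0 : ∀ x u, 0 ≤ q x u := fun x u =>
    div_nonneg (mul_nonneg (hjq x u).le (hmUr u)) (hmUq u).le
  have haq : ∀ x u, 0 < jnt p r x u → 0 < q x u := by
    intro x u h
    exact div_pos (mul_pos (hjq x u) (lt_of_lt_of_le h (hle x u))) (hmUq u)
  have hqu : ∀ u, ∑ x, q x u = mU p r u := by
    intro u
    show ∑ x, jnt p qs x u * mU p r u / mU p qs u = mU p r u
    rw [← Finset.sum_div, ← Finset.sum_mul]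
    rw [show (∑ x, jnt p qs x u) = mU p qs u from rfl]
    rw [mul_comm, mul_div_assoc, div_self (hmUq u).ne', mul_one]
  have hsum : ∑ z : X × U, q z.1 z.2 = ∑ z : X × U, jnt p r z.1 z.2 := by
    rw [Fintype.sum_prod_type, Fintype.sum_prod_type]
    have l : ∑ x, ∑ u, q x u = ∑ u, ∑ x, q x u := Finset.sum_comm
    have rr : ∑ x : X, ∑ u : U, jnt p r x u = ∑ u, ∑ x, jnt p r x u := Finset.sum_comm
    rw [l, rr]
    apply Finset.sum_congr rfl
    intro u _
    rw [hqu u]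
    rfl
  have hg : 0 ≤ ∑ x, ∑ u, jnt p r x u * Real.logb 2 (jnt p r x u / q x u) := by
    have h := gibbs (fun z : X × U => jnt p r z.1 z.2) (fun z => q z.1 z.2)
      (fun z => ha0 z.1 z.2) (fun z => hq0 z.1 z.2) (fun z => haq z.1 z.2) hsum
    rw [Fintype.sum_prod_type] at h
    exact h
  have hterm : ∀ x u, jnt p r x u * Real.logb 2 (jnt p r x u / q x u)
      = jnt p r x u * infoXU p r x u - jnt p r x u * infoXU p qs x u := by
    intro x u
    rcases eq_or_lt_of_le (ha0 x u) with h | h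
    · simp [← h]
    · have hmUru : 0 < mU p r u := lt_of_lt_of_le h (hle x u)
      rw [← mul_sub]
      congr 1
      have h1 := (hmX x).ne'
      have h2 := hmUru.ne'
      have h3 := (hjq x u).ne'
      have h4 := (hmUq u).ne'
      rw [infoXU, infoXU, ← Real.logb_div
        (div_pos h (mul_pos (hmX x) hmUru)).ne'
        (div_pos (hjq x u) (mul_pos (hmX x) (hmUq u))).ne']
      congr 1
      have hq' : q x u = jnt p qs x u * mU p r u / mU p qs u := rfl
      rw [hq']
      field_simp
  have : ∑ x, ∑ u, jnt p r x u * Real.logb 2 (jnt p r x u / q x u)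
      = mutXU p r - ∑ x, ∑ u, jnt p r x u * infoXU p qs x u := by
    rw [mutXU, ← Finset.sum_sub_distrib]
    apply Finset.sum_congr rfl
    intro x _
    rw [← Finset.sum_sub_distrib]
    exact Finset.sum_congr rfl fun u _ => hterm x u
  rw [this] at hg
  linarith

/-- With `d(x,u) := −ι_{X;U}(x;u)` defined from the IB-optimal channel `qs`,
for any channel `r`, `E[d(X,Ũ)] ≤ −C` implies `I(X;Ũ) ≥ C`; consequently the noisy
rate-distortion function at level `−C` equals `IB(C)`, provided the IB(C) minimizer `qs`
satisfies `E[ι_{X;U*}(X;U*)] = I(X;U*)`. -/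
theorem stmt8 [Fintype X] [Fintype Y] [Fintype U]
    (p : X → Y → ℝ) (hp : ∀ x y, 0 < p x y) (hps : ∑ x, ∑ y, p x y = 1)
    (qs : Y → U → ℝ) (hqpos : ∀ y u, 0 < qs y u) (hqchan : qs ∈ Chan Y U)
    (C : ℝ)
    (hfeas : mutXU p qs ≥ C)
    (hmin : ∀ r ∈ Chan Y U, mutXU p r ≥ C → mutYU p qs ≤ mutYU p r)
    (hEi : (∑ x, ∑ u, jnt p qs x u * infoXU p qs x u) = mutXU p qs) :
    (∀ r ∈ Chan Y U, expDist p qs r ≤ -C → mutXU p r ≥ C)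
    ∧ sInf {v : ℝ | ∃ r ∈ Chan Y U, expDist p qs r ≤ -C ∧ mutYU p r = v}
        = sInf {v : ℝ | ∃ r ∈ Chan Y U, mutXU p r ≥ C ∧ mutYU p r = v} := by
  obtain ⟨hq0, hq1⟩ := hqchan
  have part1 : ∀ r ∈ Chan Y U, expDist p qs r ≤ -C → mutXU p r ≥ C := by
    intro r hr hd
    have hexp : expDist p qs r = -(∑ x, ∑ u, jnt p r x u * infoXU p qs x u) := by
      rw [expDist, ← Finset.sum_neg_distrib]
      apply Finset.sum_congr rfl
      intro x _
      rw [← Finset.sum_neg_distrib]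
      exact Finset.sum_congr rfl fun u _ => by ring
    have h1 : C ≤ ∑ x, ∑ u, jnt p r x u * infoXU p qs x u := by
      rw [hexp] at hd; linarith
    exact le_trans h1 (keyineq p hp hps qs hqpos r hr.1)
  refine ⟨part1, ?_⟩
  have hqsd : expDist p qs qs ≤ -C := by
    have heq : expDist p qs qs = -(mutXU p qs) := by
      rw [← hEi, expDist, ← Finset.sum_neg_distrib]
      apply Finset.sum_congr rfl
      intro x _
      rw [← Finset.sum_neg_distrib]
      exact Finset.sum_congr rfl fun u _ => by ring
    rw [heq]; linarith
  set S1 := {v : ℝ | ∃ r ∈ Chan Y U, expDist p qs r ≤ -C ∧ mutYU p r = v} with hS1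
  set S2 := {v : ℝ | ∃ r ∈ Chan Y U, mutXU p r ≥ C ∧ mutYU p r = v} with hS2
  have hsub : S1 ⊆ S2 := by
    rintro v ⟨r, hr, hd, hv⟩
    exact ⟨r, hr, part1 r hr hd, hv⟩
  have hm1 : mutYU p qs ∈ S1 := ⟨qs, ⟨hq0, hq1⟩, hqsd, rfl⟩
  have hlb : ∀ v ∈ S2, mutYU p qs ≤ v := by
    rintro v ⟨r, hr, hf, hv⟩
    rw [← hv]; exact hmin r hr hf
  have hbdd2 : BddBelow S2 := ⟨mutYU p qs, hlb⟩
  have hbdd1 : BddBelow S1 := hbdd2.mono hsub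
  have e1 : sInf S1 ≤ mutYU p qs := csInf_le hbdd1 hm1
  have e2 : mutYU p qs ≤ sInf S2 := le_csInf ⟨_, hsub hm1⟩ hlb
  have e3 : sInf S2 ≤ sInf S1 := csInf_le_csInf hbdd2 ⟨_, hm1⟩ hsub
  linarith


end
end

section
/- Expected length after prefix-free coding: if K̃ is a positive-integer random variable with E[log K̃] ≤ a, then there exists a prefix-free binary code for K̃ with expected codeword length at most a + log(a + 2) + 3. -/
open Finset

/-- Fixed-width binary representation. -/
def stmt18Bits (n x : ℕ) : List Bool := (List.range n).map x.testBit

lemma stmt18Bits_length (n x : ℕ) : (stmt18Bits n x).length = n := by simp [stmt18Bits]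

lemma stmt18Bits_inj {n x y : ℕ} (hx : x < 2^n) (hy : y < 2^n)
    (h : stmt18Bits n x = stmt18Bits n y) : x = y := by
  apply Nat.eq_of_testBit_eq
  intro i
  by_cases hi : i < n
  · have := congrArg (fun l => l[i]?) h
    simpa [stmt18Bits, List.getElem?_map, List.getElem?_range, hi] using this
  · push_neg at hi
    rw [Nat.testBit_lt_two_pow (lt_of_lt_of_le hx (Nat.pow_le_pow_right (by norm_num) hi)),
      Nat.testBit_lt_two_pow (lt_of_lt_of_le hy (Nat.pow_le_pow_right (by norm_num) hi))]

lemma stmt18_unary_eq : ∀ (q q' : ℕ) (r r' : List Bool),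
    List.replicate q true ++ false :: r = List.replicate q' true ++ false :: r' →
    q = q' ∧ r = r' := by
  intro q
  induction q with
  | zero => intro q' r r' h; cases q' with
    | zero => simpa using h
    | succ n => simp [List.replicate_succ] at h
  | succ n ih => intro q' r r' h; cases q' with
    | zero => simp [List.replicate_succ] at h
    | succ m =>
      simp only [List.replicate_succ, List.cons_append, List.cons.injEq] at h
      obtain ⟨hq, hr⟩ := ih m r r' h.2
      exact ⟨by omega, hr⟩

/-- The explicit prefix-free code: `m = ⌊log₂ k⌋` is encoded by unary `m / 2^t`,
then `t` bits for `m % 2^t`, then `m` bits for `k - 2^m`. -/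
def stmt18Code (t k : ℕ) : List Bool :=
  List.replicate (Nat.log 2 k / 2^t) true ++
    false :: (stmt18Bits t (Nat.log 2 k % 2^t) ++
      stmt18Bits (Nat.log 2 k) (k - 2 ^ Nat.log 2 k))

lemma stmt18Code_length (t k : ℕ) :
    (stmt18Code t k).length = Nat.log 2 k / 2^t + 1 + t + Nat.log 2 k := by
  simp [stmt18Code, stmt18Bits_length]; ring

lemma stmt18Code_prefix_free {t i j : ℕ} (hi : 1 ≤ i) (hj : 1 ≤ j) (hij : i ≠ j) :
    ¬ (stmt18Code t i <+: stmt18Code t j) := by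
  rintro ⟨s, hs⟩
  set mi := Nat.log 2 i with hmi
  set mj := Nat.log 2 j with hmj
  rw [stmt18Code, stmt18Code] at hs
  have hs' : List.replicate (mi / 2^t) true ++
      false :: ((stmt18Bits t (mi % 2^t) ++ stmt18Bits mi (i - 2 ^ mi)) ++ s) =
      List.replicate (mj / 2^t) true ++
      false :: (stmt18Bits t (mj % 2^t) ++ stmt18Bits mj (j - 2 ^ mj)) := by
    rw [← hs]; simp [hmi]
  obtain ⟨hq, hr⟩ := stmt18_unary_eq _ _ _ _ hs'
  rw [List.append_assoc] at hr
  obtain ⟨hb1, hb2⟩ := List.append_inj hr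
    (by rw [stmt18Bits_length, stmt18Bits_length])
  have hmod : mi % 2^t = mj % 2^t :=
    stmt18Bits_inj (Nat.mod_lt _ (by positivity)) (Nat.mod_lt _ (by positivity)) hb1
  have hm : mi = mj := by
    rw [← Nat.div_add_mod mi (2^t), ← Nat.div_add_mod mj (2^t), hq, hmod]
  have hlen : s.length = 0 := by
    have := congrArg List.length hb2
    simp only [List.length_append, stmt18Bits_length, hm] at this
    omega
  rw [List.length_eq_zero_iff] at hlen
  subst hlen
  rw [List.append_nil, hm] at hb2
  have h2i : 2 ^ mi ≤ i := Nat.pow_log_le_self 2 (by omega)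
  have h2j : 2 ^ mj ≤ j := Nat.pow_log_le_self 2 (by omega)
  have h2i' : i < 2 ^ (mi + 1) := Nat.lt_pow_succ_log_self (by norm_num) i
  have h2j' : j < 2 ^ (mj + 1) := Nat.lt_pow_succ_log_self (by norm_num) j
  have hpow : (2:ℕ)^mi = 2^mj := by rw [hm]
  have hx : i - 2 ^ mj = j - 2 ^ mj := by
    apply stmt18Bits_inj (n := mj) _ _ hb2
    · rw [pow_succ] at h2i'; omega
    · rw [pow_succ] at h2j'; omega
  exact hij (by omega)

lemma stmt18_log_le_logb (k : ℕ) : (Nat.log 2 k : ℝ) ≤ Real.logb 2 k := by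
  rcases Nat.eq_zero_or_pos k with hk | hk
  · simp [hk]
  · have h1 : ((2:ℕ)^(Nat.log 2 k) : ℝ) ≤ (k : ℝ) := by
      exact_mod_cast Nat.pow_log_le_self 2 hk.ne'
    have h2 := Real.logb_le_logb_of_le (b := 2) (x := ((2:ℝ)^(Nat.log 2 k))) (by norm_num)
      (by positivity) (by push_cast at h1 ⊢; exact h1)
    simp [Real.logb_pow] at h2
    simpa [Real.logb_self_eq_one] using h2

/-- If `K̃` is a positive-integer random variable (distribution `p`) with
`E[log₂ K̃] ≤ a`, there is a prefix-free binary code with expected codeword length at most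
`a + log₂(a+2) + 3`. (Moment and length bounds are stated via finite partial sums, which
is equivalent since all summands are nonnegative.) -/
theorem stmt18 (p : ℕ → ℝ) (a : ℝ) (ha : 0 ≤ a)
    (hp0 : p 0 = 0) (hnn : ∀ k, 0 ≤ p k) (hsum : ∑' k, p k = 1)
    (hE : ∀ s : Finset ℕ, ∑ k ∈ s, p k * Real.logb 2 k ≤ a) :
    ∃ c : ℕ → List Bool,
      (∀ i j : ℕ, 0 < p i → 0 < p j → i ≠ j → ¬ (c i <+: c j)) ∧
      ∀ s : Finset ℕ, ∑ k ∈ s, p k * (c k).length ≤ a + Real.logb 2 (a + 2) + 3 := by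
  set t := ⌈Real.logb 2 (a+2)⌉₊ with htdef
  refine ⟨stmt18Code t, ?_, ?_⟩
  · intro i j hpi hpj hij
    have hi : 1 ≤ i := by
      rcases Nat.eq_zero_or_pos i with h | h
      · rw [h, hp0] at hpi; linarith
      · exact h
    have hj : 1 ≤ j := by
      rcases Nat.eq_zero_or_pos j with h | h
      · rw [h, hp0] at hpj; linarith
      · exact h
    exact stmt18Code_prefix_free hi hj hij
  · intro s
    have hL0 : (0:ℝ) ≤ Real.logb 2 (a+2) := Real.logb_nonneg (by norm_num) (by linarith)
    have ht1 : (t:ℝ) ≤ Real.logb 2 (a+2) + 1 := le_of_lt (Nat.ceil_lt_add_one hL0)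
    have ht2 : a + 2 ≤ (2:ℝ)^t := by
      have h1 : a + 2 = (2:ℝ) ^ (Real.logb 2 (a+2)) :=
        (Real.rpow_logb (by norm_num) (by norm_num) (by linarith)).symm
      have h2 : (2:ℝ) ^ (Real.logb 2 (a+2)) ≤ (2:ℝ) ^ ((t:ℕ):ℝ) :=
        Real.rpow_le_rpow_of_exponent_le (by norm_num) (Nat.le_ceil _)
      rw [Real.rpow_natCast] at h2
      linarith
    have hpt : (0:ℝ) < (2:ℝ)^t := by positivity
    have hlen : ∀ k, ((stmt18Code t k).length : ℝ) ≤
        (1 + ((2:ℝ)^t)⁻¹) * Real.logb 2 k + (1 + t) := by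
      intro k
      rw [stmt18Code_length]
      have hm := stmt18_log_le_logb k
      have hq : ((Nat.log 2 k / 2^t : ℕ) : ℝ) ≤ (Nat.log 2 k : ℝ) / 2^t := by
        have := Nat.cast_div_le (m := Nat.log 2 k) (n := 2^t) (α := ℝ)
        push_cast at this; exact this
      have hLnn : (0:ℝ) ≤ Real.logb 2 k := le_trans (by positivity) hm
      push_cast
      rw [div_eq_mul_inv] at hq
      have h3 : (Nat.log 2 k : ℝ) * ((2:ℝ)^t)⁻¹ ≤ Real.logb 2 k * ((2:ℝ)^t)⁻¹ :=
        mul_le_mul_of_nonneg_right hm (by positivity)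
      nlinarith
    have hsle : ∑ k ∈ s, p k ≤ 1 := by
      rw [← hsum]
      apply Summable.sum_le_tsum s (fun i _ => hnn i)
      by_contra h
      rw [tsum_eq_zero_of_not_summable h] at hsum
      norm_num at hsum
    have hinv : ((2:ℝ)^t)⁻¹ * a ≤ 1 := by
      rw [inv_mul_le_iff₀ hpt]
      linarith
    calc ∑ k ∈ s, p k * ((stmt18Code t k).length : ℝ)
        ≤ ∑ k ∈ s, p k * ((1 + ((2:ℝ)^t)⁻¹) * Real.logb 2 k + (1 + t)) :=
          Finset.sum_le_sum (fun k _ => mul_le_mul_of_nonneg_left (hlen k) (hnn k))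
      _ = (1 + ((2:ℝ)^t)⁻¹) * (∑ k ∈ s, p k * Real.logb 2 k) + (1 + t) * (∑ k ∈ s, p k) := by
          rw [Finset.mul_sum, Finset.mul_sum, ← Finset.sum_add_distrib]
          exact Finset.sum_congr rfl (fun k _ => by ring)
      _ ≤ (1 + ((2:ℝ)^t)⁻¹) * a + (1 + t) * 1 := by
          have h1 : (0:ℝ) ≤ 1 + ((2:ℝ)^t)⁻¹ := by positivity
          have h2 : (0:ℝ) ≤ 1 + (t:ℝ) := by positivity
          exact add_le_add (mul_le_mul_of_nonneg_left (hE s) h1)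
            (mul_le_mul_of_nonneg_left hsle h2)
      _ ≤ a + Real.logb 2 (a + 2) + 3 := by nlinarith
end
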